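/- Let (A(t))_{t∈ℕ} be a sequence of n×n row-stochastic real matrices and δ with 0 < δ < 1 such that min⁺ A(t) ≥ δ for all t. Let 0 < t_0 < t_1 < ... be a strictly increasing sequence of natural numbers and a > 0 a real number such that t_{i+1} − t_i ≤ a·log(log(i+3)) for all i ∈ ℕ. Then ∑_{i=0}^∞ min⁺ A(t_{i+1}, t_i) = ∞, where A(t_{i+1}, t_i) := A(t_{i+1}−1)···A(t_i) is the backward accumulation; i.e., a growth of the intercommunication intervals as quick as log(log(i)) still guarantees the divergence hypothesis of the convergence theorem. -/

import Mathlib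

open Matrix Filter Topology

/-- Backward accumulation `A(t,s) = A(t-1) * A(t-2) * ⋯ * A(s)`
(with `backAcc A s s` the identity matrix). -/
def backAcc {n : ℕ} (A : ℕ → Matrix (Fin n) (Fin n) ℝ) (s t : ℕ) :
    Matrix (Fin n) (Fin n) ℝ :=
  ((List.range' s (t - s)).reverse.map A).prod

/-- A matrix is row-stochastic if all entries are nonnegative and every row
sums to `1`. -/
def RowStochastic {n : ℕ} (A : Matrix (Fin n) (Fin n) ℝ) : Prop :=
  (∀ i j, 0 ≤ A i j) ∧ ∀ i, ∑ j, A i j = 1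

/-- `minPos A` is the smallest positive entry of `A`. -/
noncomputable def minPos {n : ℕ} (A : Matrix (Fin n) (Fin n) ℝ) : ℝ :=
  sInf {x : ℝ | 0 < x ∧ ∃ i j, A i j = x}

/-! Every factor of `A(t_{i+1}, t_i)` has all positive entries at least `δ`, and a positive entry
of a product of nonnegative matrices dominates a product of positive entries of the factors, so
`min⁺ A(t_{i+1}, t_i) ≥ δ ^ (t_{i+1} - t_i) ≥ δ ^ (a log log (i+3)) = log (i+3) ^ (a log δ)`
(using `δ ≤ 1`).
Any real power of `log` is eventually larger than `1 / x`, so the series diverges like the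
harmonic series. -/

section MinPos

variable {n : ℕ}

lemma minPos_nonneg (A : Matrix (Fin n) (Fin n) ℝ) : 0 ≤ minPos A :=
  Real.sInf_nonneg fun _ hx => hx.1.le

lemma minPos_le_apply (A : Matrix (Fin n) (Fin n) ℝ) {i j : Fin n} (h : 0 < A i j) :
    minPos A ≤ A i j :=
  csInf_le ⟨0, fun _ hx => hx.1.le⟩ ⟨h, i, j, rfl⟩

lemma pos_of_pos_minPos {A : Matrix (Fin n) (Fin n) ℝ} (h : 0 < minPos A) : 0 < n := by
  refine Nat.pos_of_ne_zero fun hn => h.ne' ?_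
  subst hn
  refine (congrArg sInf ?_).trans Real.sInf_empty
  exact Set.eq_empty_of_forall_notMem fun _ ⟨_, i, _⟩ => i.elim0

lemma RowStochastic.exists_pos_apply {A : Matrix (Fin n) (Fin n) ℝ} (hA : RowStochastic A)
    (i : Fin n) : ∃ j, 0 < A i j := by
  obtain ⟨j, -, hj⟩ := Finset.exists_lt_of_sum_lt (s := Finset.univ) (f := fun _ => (0 : ℝ))
    (g := A i) (by simp [hA.2 i])
  exact ⟨j, hj⟩

lemma RowStochastic.le_minPos [NeZero n] {A : Matrix (Fin n) (Fin n) ℝ} (hA : RowStochastic A)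
    {b : ℝ} (hb : ∀ i j, 0 < A i j → b ≤ A i j) : b ≤ minPos A := by
  obtain ⟨j, hj⟩ := hA.exists_pos_apply 0
  refine le_csInf ⟨_, hj, 0, j, rfl⟩ ?_
  rintro _ ⟨hx, i, j, rfl⟩
  exact hb i j hx

lemma RowStochastic.one : RowStochastic (1 : Matrix (Fin n) (Fin n) ℝ) :=
  ⟨fun i j => by by_cases h : i = j <;> simp [one_apply, h], fun i => by simp [one_apply]⟩

lemma RowStochastic.mul {B C : Matrix (Fin n) (Fin n) ℝ} (hB : RowStochastic B)
    (hC : RowStochastic C) : RowStochastic (B * C) := by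
  refine ⟨fun i j => ?_, fun i => ?_⟩ <;> simp only [mul_apply]
  · exact Finset.sum_nonneg fun k _ => mul_nonneg (hB.1 i k) (hC.1 k j)
  · rw [Finset.sum_comm]
    simp [← Finset.mul_sum, hC.2, hB.2 i]

lemma RowStochastic.list_prod {l : List (Matrix (Fin n) (Fin n) ℝ)}
    (hl : ∀ A ∈ l, RowStochastic A) : RowStochastic l.prod := by
  induction l with
  | nil => exact RowStochastic.one
  | cons A l ih =>
    rw [List.prod_cons]
    exact (hl A List.mem_cons_self).mul (ih fun B hB => hl B (List.mem_cons_of_mem A hB))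

lemma one_le_minPos_one [NeZero n] : 1 ≤ minPos (1 : Matrix (Fin n) (Fin n) ℝ) :=
  RowStochastic.one.le_minPos fun i j h => by
    by_cases hij : i = j <;> simp_all [one_apply]

lemma minPos_mul_le_minPos_mul [NeZero n] {B C : Matrix (Fin n) (Fin n) ℝ}
    (hB : RowStochastic B) (hC : RowStochastic C) : minPos B * minPos C ≤ minPos (B * C) := by
  refine (hB.mul hC).le_minPos fun i j hij => ?_
  have hnonneg : ∀ k, 0 ≤ B i k * C k j := fun k => mul_nonneg (hB.1 i k) (hC.1 k j)
  obtain ⟨k, -, hk⟩ := Finset.exists_lt_of_sum_lt (s := Finset.univ) (f := fun _ => (0 : ℝ))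
    (g := fun k => B i k * C k j) (by simpa [mul_apply] using hij)
  have hBik : 0 < B i k := lt_of_le_of_ne (hB.1 i k) fun h => by simp [← h] at hk
  have hCkj : 0 < C k j := lt_of_le_of_ne (hC.1 k j) fun h => by simp [← h] at hk
  calc minPos B * minPos C ≤ B i k * C k j :=
        mul_le_mul (minPos_le_apply B hBik) (minPos_le_apply C hCkj) (minPos_nonneg C)
          hBik.le
    _ ≤ (B * C) i j := Finset.single_le_sum (fun k _ => hnonneg k) (Finset.mem_univ k)

lemma pow_length_le_minPos_list_prod [NeZero n] {δ : ℝ} (hδ : 0 ≤ δ)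
    {l : List (Matrix (Fin n) (Fin n) ℝ)}
    (hl : ∀ A ∈ l, RowStochastic A ∧ δ ≤ minPos A) :
    δ ^ l.length ≤ minPos l.prod := by
  induction l with
  | nil => simpa using one_le_minPos_one
  | cons A l ih =>
    have htail : ∀ B ∈ l, RowStochastic B ∧ δ ≤ minPos B :=
      fun B hB => hl B (List.mem_cons_of_mem A hB)
    obtain ⟨hA, hδA⟩ := hl A List.mem_cons_self
    rw [List.prod_cons, List.length_cons, pow_succ']
    calc δ * δ ^ l.length ≤ minPos A * minPos l.prod :=
          mul_le_mul hδA (ih htail) (pow_nonneg hδ _) (minPos_nonneg A)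
      _ ≤ minPos (A * l.prod) :=
          minPos_mul_le_minPos_mul hA (RowStochastic.list_prod fun B hB => (htail B hB).1)

lemma pow_sub_le_minPos_backAcc [NeZero n] (A : ℕ → Matrix (Fin n) (Fin n) ℝ) {δ : ℝ}
    (hδ : 0 ≤ δ) (hA : ∀ s, RowStochastic (A s) ∧ δ ≤ minPos (A s)) (s u : ℕ) :
    δ ^ (u - s) ≤ minPos (backAcc A s u) := by
  simpa [backAcc] using pow_length_le_minPos_list_prod hδ
    (l := (List.range' s (u - s)).reverse.map A) (by simpa using fun _ s _ _ h => h ▸ hA s)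

end MinPos

lemma Real.not_summable_rpow_log_natCast_add (r c : ℝ) :
    ¬ Summable fun i : ℕ => Real.log (i + c) ^ r := by
  intro hsum
  have htend : Tendsto (fun i : ℕ => (i : ℝ) + c) atTop atTop :=
    tendsto_atTop_add_const_right _ c tendsto_natCast_atTop_atTop
  have hbound : ∀ᶠ x : ℝ in atTop, Real.log x ^ (-r) ≤ x ^ (1 : ℝ) := by
    filter_upwards [(isLittleO_log_rpow_rpow_atTop (-r) one_pos).bound one_pos,
      eventually_gt_atTop 1] with x hx hx1
    simpa [abs_of_pos (Real.log_pos hx1), abs_of_pos (zero_lt_one.trans hx1),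
      abs_of_pos (Real.rpow_pos_of_pos (Real.log_pos hx1) _)] using hx
  refine (Real.summable_one_div_nat_add_rpow c 1).not.mpr (lt_irrefl 1) ?_
  refine hsum.of_norm_bounded_eventually_nat ?_
  filter_upwards [htend.eventually hbound, htend.eventually (eventually_gt_atTop 1)] with i hi hi1
  have hlog : 0 < Real.log (i + c) := Real.log_pos hi1
  rw [Real.rpow_neg hlog.le] at hi
  rw [Real.norm_eq_abs, abs_of_pos (by positivity), abs_of_pos (zero_lt_one.trans hi1), one_div]
  calc ((i + c) ^ (1 : ℝ))⁻¹ ≤ (Real.log (i + c) ^ r)⁻¹⁻¹ :=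
        inv_anti₀ (by positivity) hi
    _ = Real.log (i + c) ^ r := inv_inv _

lemma rpow_log_mul_log_le_pow {δ a x : ℝ} (hδ0 : 0 < δ) (hδ1 : δ ≤ 1) (hx : 1 < x)
    {k : ℕ} (hk : (k : ℝ) ≤ a * Real.log (Real.log x)) :
    Real.log x ^ (a * Real.log δ) ≤ δ ^ k := by
  rw [Real.rpow_def_of_pos (Real.log_pos hx), ← Real.rpow_natCast, Real.rpow_def_of_pos hδ0]
  exact Real.exp_le_exp.mpr (by nlinarith [Real.log_nonpos hδ0.le hδ1])

theorem statement18_general {n : ℕ} (A : ℕ → Matrix (Fin n) (Fin n) ℝ)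
    (hstoch : ∀ s, RowStochastic (A s))
    (δ : ℝ) (hδ0 : 0 < δ) (hδ1 : δ < 1)
    (hmin : ∀ s, δ ≤ minPos (A s))
    (t : ℕ → ℕ) (hmono : StrictMono t)
    (a : ℝ)
    (hgap : ∀ i : ℕ, ((t (i + 1) : ℝ) - (t i : ℝ)) ≤ a * Real.log (Real.log (i + 3))) :
    Tendsto (fun N => ∑ i ∈ Finset.range N, minPos (backAcc A (t i) (t (i + 1))))
      atTop atTop := by
  have : NeZero n := ⟨(pos_of_pos_minPos (hδ0.trans_le (hmin 0))).ne'⟩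
  have hgt : ∀ i : ℕ, (1 : ℝ) < i + 3 := fun i => by linarith [(i.cast_nonneg : (0 : ℝ) ≤ i)]
  have hlower : ∀ i : ℕ, Real.log (i + 3) ^ (a * Real.log δ) ≤
      minPos (backAcc A (t i) (t (i + 1))) := fun i =>
    (rpow_log_mul_log_le_pow hδ0 hδ1.le (hgt i)
      (by rw [Nat.cast_sub (hmono i.lt_succ_self).le]; exact hgap i)).trans
    (pow_sub_le_minPos_backAcc A hδ0.le (fun s => ⟨hstoch s, hmin s⟩) _ _)
  have hnonneg : ∀ i : ℕ, 0 ≤ Real.log (i + 3) ^ (a * Real.log δ) :=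
    fun i => Real.rpow_nonneg (Real.log_nonneg (hgt i).le) _
  rw [← not_summable_iff_tendsto_nat_atTop_of_nonneg fun i => (hnonneg i).trans (hlower i)]
  exact fun hsum =>
    Real.not_summable_rpow_log_natCast_add _ 3 (hsum.of_nonneg_of_le hnonneg hlower)

/-- If `min⁺ A(t) ≥ δ > 0` for all `t` and the intercommunication intervals
satisfy `t (i+1) - t i ≤ a * log (log (i + 3))`, then
`∑ i, min⁺ A(t (i+1), t i) = ∞`: a growth of the intercommunication intervals
as quick as `log (log i)` still guarantees the divergence hypothesis of the
convergence theorem. -/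
theorem statement18 {n : ℕ} (A : ℕ → Matrix (Fin n) (Fin n) ℝ)
    (hstoch : ∀ s, RowStochastic (A s))
    (δ : ℝ) (hδ0 : 0 < δ) (hδ1 : δ < 1)
    (hmin : ∀ s, δ ≤ minPos (A s))
    (t : ℕ → ℕ) (ht0 : 0 < t 0) (hmono : StrictMono t)
    (a : ℝ) (ha : 0 < a)
    (hgap : ∀ i : ℕ, ((t (i + 1) : ℝ) - (t i : ℝ)) ≤ a * Real.log (Real.log (i + 3))) :
    Tendsto (fun N => ∑ i ∈ Finset.range N, minPos (backAcc A (t i) (t (i + 1))))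
      atTop atTop :=
  statement18_general A hstoch δ hδ0 hδ1 hmin t hmono a hgap
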